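/- arXiv:1805.11309 — 4 statements merged into one kernel-verified Lean document; each statement's English description precedes it below -/
import Mathlib

section
/- Let (λ_j)_{j≥1} be a nondecreasing sequence of positive reals (eigenvalues of the Dirichlet Laplacian) and let v ∈ L²(Ω) have expansion coefficients v_j = (v, φ_j). For 0 < α < 1 define u(t) = ∑_j E_{α,1}(-λ_j t^α) v_j φ_j. If |E_{α,1}(-x)| ≤ c/(1+x) for x ≥ 0, then for any p ∈ [0,2] and t > 0, ‖u(t)‖_{Ḣ^p} ≤ c t^{-pα/2} ‖v‖_{L²}, where ‖w‖²_{Ḣ^p} = ∑_j λ_j^p (w,φ_j)². -/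
/-- The one-parameter Mittag-Leffler function `E_{α,1}(x) = ∑ x^k / Γ(kα+1)`. -/
noncomputable def ml (α x : ℝ) : ℝ := ∑' k : ℕ, x ^ k / Real.Gamma (k * α + 1)

theorem stmt11 (α : ℝ) (hα0 : 0 < α) (hα1 : α < 1)
    (lam : ℕ → ℝ) (hlampos : ∀ j, 0 < lam j) (hlammono : Monotone lam)
    (c : ℝ) (hc : 0 < c) (hE : ∀ x : ℝ, 0 ≤ x → |ml α (-x)| ≤ c / (1 + x))
    (v : ℕ → ℝ) (hv : Summable fun j => (v j) ^ 2)
    (p t : ℝ) (hp : p ∈ Set.Icc (0:ℝ) 2) (ht : 0 < t) :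
    (∑' j : ℕ, (lam j) ^ p * (ml α (-(lam j * t ^ α)) * v j) ^ 2) ≤
      c ^ 2 * t ^ (-(p * α)) * ∑' j : ℕ, (v j) ^ 2 := by
  obtain ⟨hp0, hp2⟩ := hp
  have hta : (0:ℝ) < t ^ α := Real.rpow_pos_of_pos ht α
  -- termwise bound
  have key : ∀ j, (lam j) ^ p * (ml α (-(lam j * t ^ α)) * v j) ^ 2 ≤
      c ^ 2 * t ^ (-(p * α)) * (v j) ^ 2 := by
    intro j
    set x := lam j * t ^ α with hxdef
    have hx : 0 ≤ x := le_of_lt (mul_pos (hlampos j) hta)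
    have h1x : (0:ℝ) < 1 + x := by linarith
    -- bound on ml squared
    have hE2 : (ml α (-x)) ^ 2 ≤ (c / (1 + x)) ^ 2 := by
      rw [← sq_abs]
      exact pow_le_pow_left₀ (abs_nonneg _) (hE x hx) 2
    -- lam j ^ p = x ^ p * t ^ (-(p*α))
    have hlam : lam j = x * t ^ (-α) := by
      rw [hxdef, mul_assoc, ← Real.rpow_add ht, add_neg_cancel, Real.rpow_zero, mul_one]
    have hlp : (lam j) ^ p = x ^ p * t ^ (-(p * α)) := by
      rw [hlam, Real.mul_rpow hx (Real.rpow_nonneg ht.le _), ← Real.rpow_mul ht.le]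
      ring_nf
    -- x^p ≤ (1+x)^2
    have hxp : x ^ p ≤ (1 + x) ^ 2 := by
      have h1 : x ^ p ≤ (1 + x) ^ p :=
        Real.rpow_le_rpow hx (by linarith) hp0
      have h2 : (1 + x) ^ p ≤ (1 + x) ^ (2:ℝ) :=
        Real.rpow_le_rpow_of_exponent_le (by linarith) hp2
      calc x ^ p ≤ (1 + x) ^ (2:ℝ) := h1.trans h2
        _ = (1 + x) ^ 2 := by rw [← Real.rpow_natCast (1+x) 2]; norm_num
    have hml2 : (lam j) ^ p * (ml α (-x)) ^ 2 ≤ c ^ 2 * t ^ (-(p * α)) := by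
      have : (lam j) ^ p * (ml α (-x)) ^ 2 ≤
          (x ^ p * t ^ (-(p * α))) * (c / (1 + x)) ^ 2 := by
        rw [hlp]
        exact mul_le_mul_of_nonneg_left hE2
          (mul_nonneg (Real.rpow_nonneg hx p) (Real.rpow_nonneg ht.le _))
      refine this.trans ?_
      rw [div_pow]
      have h1x2 : (0:ℝ) < (1 + x) ^ 2 := pow_pos h1x 2
      calc (x ^ p * t ^ (-(p * α))) * (c ^ 2 / (1 + x) ^ 2)
          ≤ ((1 + x) ^ 2 * t ^ (-(p * α))) * (c ^ 2 / (1 + x) ^ 2) := by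
            apply mul_le_mul_of_nonneg_right
            · exact mul_le_mul_of_nonneg_right hxp (Real.rpow_nonneg ht.le _)
            · positivity
        _ = c ^ 2 * t ^ (-(p * α)) := by
            field_simp
    calc (lam j) ^ p * (ml α (-x) * v j) ^ 2
        = ((lam j) ^ p * (ml α (-x)) ^ 2) * (v j) ^ 2 := by ring
      _ ≤ (c ^ 2 * t ^ (-(p * α))) * (v j) ^ 2 :=
          mul_le_mul_of_nonneg_right hml2 (sq_nonneg _)
  have hsumR : Summable fun j => c ^ 2 * t ^ (-(p * α)) * (v j) ^ 2 :=
    hv.mul_left _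
  have hsumL : Summable fun j => (lam j) ^ p * (ml α (-(lam j * t ^ α)) * v j) ^ 2 :=
    Summable.of_nonneg_of_le
      (fun j => mul_nonneg (Real.rpow_nonneg (hlampos j).le p) (sq_nonneg _))
      key hsumR
  calc (∑' j : ℕ, (lam j) ^ p * (ml α (-(lam j * t ^ α)) * v j) ^ 2)
      ≤ ∑' j : ℕ, c ^ 2 * t ^ (-(p * α)) * (v j) ^ 2 :=
        Summable.tsum_le_tsum key hsumL hsumR
    _ = c ^ 2 * t ^ (-(p * α)) * ∑' j : ℕ, (v j) ^ 2 := tsum_mul_left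
end

section
/- In the same abstract eigenfunction setting, the smoothing estimate of order two is sharp in the following sense: for p > s + 2 there is no constant c and exponent γ such that ‖F(t)v‖_{Ḣ^p} ≤ c t^{-γ} ‖v‖_{Ḣ^s} holds for all v and all t ∈ (0,1], provided λ_j → ∞ and E_{α,1}(-x) ≥ c₀/(1+x) for x ≥ 0 with some c₀ > 0. -/
open Filter

/-!
Test the estimate at `t = 1` on a single eigenfunction `φ_j`. The lower bound on the
Mittag-Leffler function gives `λ_j E_{α,1}(-λ_j) ≥ c₀ / 2` once `λ_j ≥ 1`, so the estimate forces
`λ_j ^ (p - s - 2) (c₀ / 2)² ≤ C²`, which fails for large `j` because `p - s - 2 > 0` and `λ_j → ∞`.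
-/

lemma summable_apply_single {F : ℕ → ℝ → ℝ} (hF : ∀ i, F i 0 = 0) (j : ℕ) (x : ℝ) :
    Summable fun i => F i ((Pi.single j x : ℕ → ℝ) i) :=
  summable_of_ne_finset_zero (s := {j}) fun i hi => by
    rw [Pi.single_eq_of_ne (Finset.notMem_singleton.mp hi), hF]

lemma tsum_apply_single {F : ℕ → ℝ → ℝ} (hF : ∀ i, F i 0 = 0) (j : ℕ) (x : ℝ) :
    ∑' i, F i ((Pi.single j x : ℕ → ℝ) i) = F j x := by
  rw [tsum_eq_single j fun i hi => by rw [Pi.single_eq_of_ne hi, hF], Pi.single_eq_same]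

lemma half_le_mul_of_div_one_add_le {c L m : ℝ} (hc : 0 ≤ c) (hL : 1 ≤ L)
    (hm : c / (1 + L) ≤ m) : c / 2 ≤ L * m :=
  calc c / 2 ≤ L * (c / (1 + L)) := by
        rw [mul_div_assoc', div_le_div_iff₀ two_pos (by linarith)]
        nlinarith
    _ ≤ L * m := mul_le_mul_of_nonneg_left hm (by linarith)

lemma rpow_sub_two_mul_sq_le {L m K p s : ℝ} (hL : 0 < L) (h : L ^ p * m ^ 2 ≤ K * L ^ s) :
    L ^ (p - s - 2) * (L * m) ^ 2 ≤ K := by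
  have hsplit : L ^ p * m ^ 2 = L ^ (p - s - 2) * (L * m) ^ 2 * L ^ s := by
    have hp : L ^ p = L ^ (p - s - 2) * L ^ s * L ^ (2 : ℝ) := by
      rw [← Real.rpow_add hL, ← Real.rpow_add hL]
      ring_nf
    rw [hp, Real.rpow_two]
    ring
  exact le_of_mul_le_mul_right (hsplit ▸ h) (Real.rpow_pos_of_pos hL s)

theorem stmt12_general (α : ℝ)
    (lam : ℕ → ℝ)
    (hlamtop : Tendsto lam atTop atTop)
    (c₀ : ℝ) (hc₀ : 0 < c₀) (hE : ∀ x : ℝ, 0 ≤ x → c₀ / (1 + x) ≤ ml α (-x))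
    (p s : ℝ) (hps : s + 2 < p) :
    ¬ ∃ (C γ : ℝ), ∀ (v : ℕ → ℝ), (Summable fun j => (lam j) ^ s * (v j) ^ 2) →
        ∀ t ∈ Set.Ioc (0:ℝ) 1,
          (∑' j : ℕ, (lam j) ^ p * (ml α (-(lam j * t ^ α)) * v j) ^ 2) ≤
            (C * t ^ (-γ)) ^ 2 * ∑' j : ℕ, (lam j) ^ s * (v j) ^ 2 := by
  rintro ⟨C, γ, hC⟩
  have hgrowth : Tendsto (fun j => lam j ^ (p - s - 2) * (c₀ / 2) ^ 2) atTop atTop :=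
    ((tendsto_rpow_atTop (by linarith)).comp hlamtop).atTop_mul_const (by positivity)
  obtain ⟨j, hj1, hjC⟩ :=
    ((hlamtop.eventually_ge_atTop 1).and (hgrowth.eventually_gt_atTop (C ^ 2))).exists
  have hsingle_s := tsum_apply_single (F := fun i y => lam i ^ s * y ^ 2) (by simp) j 1
  have hsingle_p :=
    tsum_apply_single (F := fun i y => lam i ^ p * (ml α (-lam i) * y) ^ 2) (by simp) j 1
  have hest := hC (Pi.single j 1)
    (summable_apply_single (F := fun i y => lam i ^ s * y ^ 2) (by simp) j 1) 1 ⟨one_pos, le_rfl⟩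
  simp only [Real.one_rpow, mul_one, one_pow] at hest hsingle_s hsingle_p
  rw [hsingle_s, hsingle_p] at hest
  have hmode := rpow_sub_two_mul_sq_le (by linarith) hest
  have hlower := half_le_mul_of_div_one_add_le hc₀.le hj1 (hE _ (by linarith))
  have hcompare : lam j ^ (p - s - 2) * (c₀ / 2) ^ 2 ≤ lam j ^ (p - s - 2) * (lam j * ml α (-lam j)) ^ 2 :=
    mul_le_mul_of_nonneg_left (pow_le_pow_left₀ (by positivity) hlower 2) (by positivity)
  linarith

/-- Sharpness of the order-two smoothing: no estimate
`‖F(t)v‖_{Ḣ^p} ≤ C t^{-γ} ‖v‖_{Ḣ^s}` can hold uniformly for `t ∈ (0,1]` when `p > s + 2`,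
stated in terms of the eigenfunction coefficients. -/
theorem stmt12 (α : ℝ) (hα0 : 0 < α) (hα1 : α < 1)
    (lam : ℕ → ℝ) (hlampos : ∀ j, 0 < lam j) (hlammono : Monotone lam)
    (hlamtop : Tendsto lam atTop atTop)
    (c₀ : ℝ) (hc₀ : 0 < c₀) (hE : ∀ x : ℝ, 0 ≤ x → c₀ / (1 + x) ≤ ml α (-x))
    (p s : ℝ) (hps : s + 2 < p) :
    ¬ ∃ (C γ : ℝ), ∀ (v : ℕ → ℝ), (Summable fun j => (lam j) ^ s * (v j) ^ 2) →
        ∀ t ∈ Set.Ioc (0:ℝ) 1,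
          (∑' j : ℕ, (lam j) ^ p * (ml α (-(lam j * t ^ α)) * v j) ^ 2) ≤
            (C * t ^ (-γ)) ^ 2 * ∑' j : ℕ, (lam j) ^ s * (v j) ^ 2 :=
  stmt12_general α lam hlamtop c₀ hc₀ hE p s hps
end

section
/- Stability of the backward Euler CQ scheme for a scalar mode: fix λ > 0, 0 < α < 1 and τ > 0, let b_j = (-1)^j (α choose j) and define U^0 = v ∈ ℝ and, for n ≥ 1, τ^{-α} ∑_{j=0}^n b_j (U^{n-j} - v) + λ U^n = 0. Then 0 < U^n ≤ v for all n ≥ 0 whenever v > 0, and the sequence (U^n) is nonincreasing. -/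
noncomputable def genBinom (α : ℝ) (j : ℕ) : ℝ :=
  (∏ i ∈ Finset.range j, (α - i)) / (Nat.factorial j)

/-! Solving the scheme for the newest value gives
`(τ^{-α} + λ) Uⁿ = τ^{-α} (∑_{j=1}^n (-b_j) U^{n-j} + (∑_{j=0}^n b_j) v)`.
Since `b₀ = 1`, `b_j ≤ 0` for `j ≥ 1`, and every partial sum
`∑_{j=0}^n b_j = (-1)ⁿ binom(α - 1, n)` is positive, the right-hand side is a positive
combination of earlier values, so `0 < Uⁿ ≤ v` follows by strong induction. Subtracting the
solved equations for `n + 1` and `n` (the new term cancels because `U⁰ = v`) writes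
`U^{n+1} - Uⁿ` as a nonnegative combination of earlier differences. -/

open Finset

section genBinom

theorem genBinom_zero (β : ℝ) : genBinom β 0 = 1 := by
  simp [genBinom]

theorem genBinom_succ (β : ℝ) (n : ℕ) :
    genBinom β (n + 1) = genBinom β n * (β - n) / (n + 1) := by
  simp only [genBinom, prod_range_succ, Nat.factorial_succ, Nat.cast_mul, Nat.cast_succ]
  field_simp

theorem genBinom_succ_eq_div_mul (β : ℝ) (n : ℕ) :
    genBinom β (n + 1) = β / (n + 1) * genBinom (β - 1) n := by
  have hprod : ∏ i ∈ range (n + 1), (β - i) = β * ∏ i ∈ range n, (β - 1 - i) := by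
    rw [prod_range_succ', mul_comm]
    congr 1
    · simp
    · exact prod_congr rfl fun i _ => by push_cast; ring
  simp only [genBinom, hprod, Nat.factorial_succ, Nat.cast_mul, Nat.cast_succ]
  field_simp

theorem genBinom_succ_eq_add (β : ℝ) (n : ℕ) :
    genBinom β (n + 1) = genBinom (β - 1) (n + 1) + genBinom (β - 1) n := by
  rw [genBinom_succ_eq_div_mul, genBinom_succ]
  field_simp
  ring

theorem neg_one_pow_mul_genBinom_pos {β : ℝ} (hβ : β < 0) (n : ℕ) :
    0 < (-1) ^ n * genBinom β n := by
  induction n with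
  | zero => simp [genBinom_zero]
  | succ n ih =>
    have hfactor : 0 < (n - β) / (n + 1) :=
      div_pos (by linarith [n.cast_nonneg (α := ℝ)]) (by positivity)
    calc 0 < (-1) ^ n * genBinom β n * ((n - β) / (n + 1)) := mul_pos ih hfactor
      _ = (-1) ^ (n + 1) * genBinom β (n + 1) := by rw [genBinom_succ]; ring

theorem neg_one_pow_succ_mul_genBinom_succ_neg {β : ℝ} (hβ0 : 0 < β) (hβ1 : β < 1)
    (n : ℕ) : (-1) ^ (n + 1) * genBinom β (n + 1) < 0 := by
  have hpos := neg_one_pow_mul_genBinom_pos (sub_neg.2 hβ1) n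
  have hfactor : 0 < β / (n + 1) := by positivity
  calc (-1) ^ (n + 1) * genBinom β (n + 1)
      = -(β / (n + 1) * ((-1) ^ n * genBinom (β - 1) n)) := by
        rw [genBinom_succ_eq_div_mul]; ring
    _ < 0 := neg_neg_of_pos (mul_pos hfactor hpos)

theorem sum_range_neg_one_pow_mul_genBinom (β : ℝ) (n : ℕ) :
    ∑ j ∈ range (n + 1), (-1) ^ j * genBinom β j = (-1) ^ n * genBinom (β - 1) n := by
  induction n with
  | zero => simp [genBinom_zero]
  | succ n ih =>
    rw [sum_range_succ, ih, genBinom_succ_eq_add]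
    ring

end genBinom

section scheme

variable {b U : ℕ → ℝ} {c lam v : ℝ}

theorem mul_eq_of_scheme (hb0 : b 0 = 1) {n : ℕ}
    (hrec : c * (∑ j ∈ range (n + 1), b j * (U (n - j) - v)) + lam * U n = 0) :
    (c + lam) * U n = c * (∑ i ∈ range n, -b (i + 1) * U (n - (i + 1)) +
      (∑ j ∈ range (n + 1), b j) * v) := by
  have hsplit : ∑ j ∈ range (n + 1), b j * (U (n - j) - v) =
      U n - (∑ j ∈ range (n + 1), b j) * v -
        ∑ i ∈ range n, -b (i + 1) * U (n - (i + 1)) := by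
    rw [sum_range_succ' _ n, sum_range_succ' b n, hb0]
    simp only [mul_sub, sum_sub_distrib, neg_mul, sum_neg_distrib, add_mul, sum_mul,
      Nat.sub_zero]
    ring
  rw [hsplit] at hrec
  linarith

theorem scheme_pos_and_le (hc : 0 < c) (hlam : 0 ≤ lam) (hv : 0 < v) (hb0 : b 0 = 1)
    (hb : ∀ j, b (j + 1) ≤ 0) (hS : ∀ n, 0 < ∑ j ∈ range (n + 1), b j) (hU0 : U 0 = v)
    (hrec : ∀ n, 1 ≤ n → c * (∑ j ∈ range (n + 1), b j * (U (n - j) - v)) + lam * U n = 0)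
    (n : ℕ) : 0 < U n ∧ U n ≤ v := by
  induction n using Nat.strong_induction_on with
  | _ n ih =>
    rcases Nat.eq_zero_or_pos n with rfl | hn
    · exact ⟨hU0 ▸ hv, hU0.le⟩
    have hsolved := mul_eq_of_scheme hb0 (hrec n hn)
    set A := ∑ i ∈ range n, -b (i + 1) * U (n - (i + 1))
    have hprev : ∀ i ∈ range n, 0 < U (n - (i + 1)) ∧ U (n - (i + 1)) ≤ v := fun i _ =>
      ih _ (Nat.sub_lt hn i.succ_pos)
    have hA_nonneg : 0 ≤ A :=
      sum_nonneg fun i hi => mul_nonneg (neg_nonneg.2 (hb i)) (hprev i hi).1.le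
    have hA_le : A ≤ (1 - ∑ j ∈ range (n + 1), b j) * v := by
      calc A ≤ ∑ i ∈ range n, -b (i + 1) * v :=
            sum_le_sum fun i hi => mul_le_mul_of_nonneg_left (hprev i hi).2 (neg_nonneg.2 (hb i))
        _ = (1 - ∑ j ∈ range (n + 1), b j) * v := by
            rw [← sum_mul, sum_range_succ' b n, hb0, sum_neg_distrib]; ring
    have hcS := mul_pos hc (mul_pos (hS n) hv)
    constructor
    · nlinarith
    · nlinarith

theorem scheme_succ_le (hc : 0 < c) (hlam : 0 ≤ lam) (hb0 : b 0 = 1) (hb : ∀ j, b (j + 1) ≤ 0)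
    (hU0 : U 0 = v) (hU1 : U 1 ≤ v)
    (hrec : ∀ n, 1 ≤ n → c * (∑ j ∈ range (n + 1), b j * (U (n - j) - v)) + lam * U n = 0)
    (n : ℕ) : U (n + 1) ≤ U n := by
  induction n using Nat.strong_induction_on with
  | _ n ih =>
    rcases Nat.eq_zero_or_pos n with rfl | hn
    · exact hU0 ▸ hU1
    have hcurr := mul_eq_of_scheme hb0 (hrec n hn)
    have hnext := mul_eq_of_scheme hb0 (hrec (n + 1) n.succ_pos)
    -- the new term `-b (n + 1) * U 0` cancels against `b (n + 1) * v` in the partial sum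
    rw [sum_range_succ _ n, sum_range_succ b (n + 1), Nat.add_sub_add_right, Nat.sub_self, hU0]
      at hnext
    have hterms : ∑ i ∈ range n, -b (i + 1) * U (n + 1 - (i + 1)) ≤
        ∑ i ∈ range n, -b (i + 1) * U (n - (i + 1)) := by
      refine sum_le_sum fun i hi => mul_le_mul_of_nonneg_left ?_ (neg_nonneg.2 (hb i))
      have hi : i < n := mem_range.1 hi
      have h := ih (n - (i + 1)) (by omega)
      rwa [show n - (i + 1) + 1 = n + 1 - (i + 1) by omega] at h
    have hle : (c + lam) * U (n + 1) ≤ (c + lam) * U n := by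
      rw [hcurr, hnext]
      nlinarith [mul_le_mul_of_nonneg_left hterms hc.le]
    exact le_of_mul_le_mul_left hle (by linarith)

end scheme

/-- Stability of the backward Euler convolution quadrature scheme for
`∂_t^α u + λ u = 0`, `u(0) = v > 0`: the discrete solution stays in `(0, v]`
and is nonincreasing. -/
theorem stmt18 (α lam τ v : ℝ) (hα0 : 0 < α) (hα1 : α < 1) (hlam : 0 < lam)
    (hτ : 0 < τ) (hv : 0 < v)
    (b : ℕ → ℝ) (hb : ∀ j, b j = (-1) ^ j * genBinom α j)
    (U : ℕ → ℝ) (hU0 : U 0 = v)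
    (hrec : ∀ n : ℕ, 1 ≤ n →
      τ ^ (-α) * (∑ j ∈ Finset.range (n + 1), b j * (U (n - j) - v)) + lam * U n = 0) :
    (∀ n, 0 < U n ∧ U n ≤ v) ∧ ∀ n, U (n + 1) ≤ U n := by
  have hc : 0 < τ ^ (-α) := Real.rpow_pos_of_pos hτ _
  have hb0 : b 0 = 1 := by simp [hb, genBinom_zero]
  have hb_succ : ∀ j, b (j + 1) ≤ 0 := fun j =>
    (hb (j + 1)).symm ▸ (neg_one_pow_succ_mul_genBinom_succ_neg hα0 hα1 j).le
  have hS : ∀ n, 0 < ∑ j ∈ range (n + 1), b j := fun n => by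
    simp only [hb, sum_range_neg_one_pow_mul_genBinom]
    exact neg_one_pow_mul_genBinom_pos (sub_neg.2 hα1) n
  have hbounds := scheme_pos_and_le hc hlam.le hv hb0 hb_succ hS hU0 hrec
  exact ⟨hbounds, scheme_succ_le hc hlam.le hb0 hb_succ hU0 (hbounds 1).2 hrec⟩
end

section
/- Stability of the L1 scheme for a scalar mode: fix λ > 0, 0 < α < 1, τ > 0, and let b_j = ((j+1)^{1-α} - j^{1-α})/Γ(2-α). Define U^0 = v > 0 and for n ≥ 1 let U^n solve τ^{-α}[b_0 U^n - b_{n-1} U^0 + ∑_{j=1}^{n-1} (b_j - b_{j-1}) U^{n-j}] + λ U^n = 0. Then 0 < U^n ≤ v for all n, and U^n is bounded by v uniformly in n, τ and λ. -/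
/-!
Multiplying the scheme by `τ ^ α` and solving for `U n` expresses `(b 0 + λ τ ^ α) U n` as a
combination of `U 0, …, U (n - 1)` with weights `b (n - 1)` and `b (j - 1) - b j`. For the L1
weights these are positive resp. nonnegative (concavity of `x ↦ x ^ (1 - α)`), and they
telescope to `b 0 ≤ b 0 + λ τ ^ α`, so strong induction keeps `U n` in `(0, U 0]`.
-/

open Finset

noncomputable def l1Weight (α : ℝ) (j : ℕ) : ℝ :=
  (((j : ℝ) + 1) ^ (1 - α) - (j : ℝ) ^ (1 - α)) / Real.Gamma (2 - α)

section L1Weight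

variable {α : ℝ}

lemma l1Weight_pos (hα : α < 1) (j : ℕ) : 0 < l1Weight α j := by
  have hpow : (j : ℝ) ^ (1 - α) < ((j : ℝ) + 1) ^ (1 - α) :=
    Real.rpow_lt_rpow j.cast_nonneg (lt_add_one _) (by linarith)
  exact div_pos (sub_pos.mpr hpow) (Real.Gamma_pos_of_pos (by linarith))

lemma l1Weight_antitone (hα₀ : 0 ≤ α) (hα₁ : α < 1) : Antitone (l1Weight α) := by
  refine antitone_nat_of_succ_le fun j => ?_
  have hmid := (Real.concaveOn_rpow (p := 1 - α) (by linarith) (by linarith)).2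
    (Set.mem_Ici.mpr j.cast_nonneg) (Set.mem_Ici.mpr (by positivity : (0 : ℝ) ≤ j + 2))
    (by norm_num : (0 : ℝ) ≤ 1 / 2) (by norm_num : (0 : ℝ) ≤ 1 / 2) (by norm_num)
  simp only [smul_eq_mul] at hmid
  rw [show (1 / 2 : ℝ) * j + 1 / 2 * (j + 2) = j + 1 by ring] at hmid
  unfold l1Weight
  gcongr ?_ / _
  · exact (Real.Gamma_pos_of_pos (by linarith)).le
  push_cast
  rw [show (j : ℝ) + 1 + 1 = j + 2 by ring]
  linarith

end L1Weight

lemma sum_Ico_one_sub_pred {b : ℕ → ℝ} {n : ℕ} (hn : 1 ≤ n) :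
    ∑ j ∈ Ico 1 n, (b (j - 1) - b j) = b 0 - b (n - 1) := by
  obtain ⟨m, rfl⟩ := Nat.exists_eq_add_of_le' hn
  rw [sum_Ico_eq_sum_range, Nat.add_sub_cancel, ← sum_range_sub' b m]
  refine sum_congr rfl fun k _ => ?_
  rw [Nat.add_sub_cancel_left, Nat.add_comm 1 k]

theorem pos_and_le_of_l1_step {b : ℕ → ℝ} (hb_pos : ∀ j, 0 < b j) (hb_anti : Antitone b)
    {c : ℝ} (hc : 0 ≤ c) {U : ℕ → ℝ} (hU0 : 0 < U 0)
    (hstep : ∀ n, 1 ≤ n →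
      (b 0 + c) * U n = b (n - 1) * U 0 + ∑ j ∈ Ico 1 n, (b (j - 1) - b j) * U (n - j)) :
    ∀ n, 0 < U n ∧ U n ≤ U 0 := by
  intro n
  induction n using Nat.strong_induction_on with
  | _ n ih =>
    rcases Nat.eq_zero_or_pos n with rfl | hn
    · exact ⟨hU0, le_rfl⟩
    have hweight : ∀ j ∈ Ico 1 n, 0 ≤ b (j - 1) - b j := fun j _ =>
      sub_nonneg.mpr (hb_anti (Nat.sub_le j 1))
    have hprev : ∀ j ∈ Ico 1 n, 0 < U (n - j) ∧ U (n - j) ≤ U 0 := fun j hj =>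
      ih _ (Nat.sub_lt hn (mem_Ico.mp hj).1)
    have hsum_nonneg : 0 ≤ ∑ j ∈ Ico 1 n, (b (j - 1) - b j) * U (n - j) :=
      sum_nonneg fun j hj => mul_nonneg (hweight j hj) (hprev j hj).1.le
    have hsum_le : ∑ j ∈ Ico 1 n, (b (j - 1) - b j) * U (n - j) ≤ (b 0 - b (n - 1)) * U 0 := by
      rw [← sum_Ico_one_sub_pred hn, sum_mul]
      exact sum_le_sum fun j hj => mul_le_mul_of_nonneg_left (hprev j hj).2 (hweight j hj)
    have hcoef : 0 < b 0 + c := add_pos_of_pos_of_nonneg (hb_pos 0) hc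
    have hpos : 0 < (b 0 + c) * U n := by
      rw [hstep n hn]
      nlinarith [hb_pos (n - 1)]
    refine ⟨pos_of_mul_pos_right hpos hcoef.le, le_of_mul_le_mul_left ?_ hcoef⟩
    rw [hstep n hn]
    nlinarith

/-- Stability of the L1 scheme for `∂_t^α u + λ u = 0`, `u(0) = v > 0`:
the discrete solution stays in `(0, v]`, uniformly in `n`, `τ` and `λ`. -/
theorem stmt19 (α lam τ v : ℝ) (hα0 : 0 < α) (hα1 : α < 1) (hlam : 0 < lam)
    (hτ : 0 < τ) (hv : 0 < v)
    (b : ℕ → ℝ)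
    (hb : ∀ j : ℕ, b j = (((j : ℝ) + 1) ^ (1 - α) - (j : ℝ) ^ (1 - α)) / Real.Gamma (2 - α))
    (U : ℕ → ℝ) (hU0 : U 0 = v)
    (hrec : ∀ n : ℕ, 1 ≤ n →
      τ ^ (-α) * (b 0 * U n - b (n - 1) * U 0 +
          ∑ j ∈ Finset.Ico 1 n, (b j - b (j - 1)) * U (n - j)) + lam * U n = 0) :
    ∀ n, 0 < U n ∧ U n ≤ v := by
  obtain rfl : b = l1Weight α := funext hb
  subst hU0
  refine pos_and_le_of_l1_step (l1Weight_pos hα1) (l1Weight_antitone hα0.le hα1)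
    (c := lam * τ ^ α) (by positivity) hv fun n hn => ?_
  have hsum_neg : ∑ j ∈ Ico 1 n, (l1Weight α j - l1Weight α (j - 1)) * U (n - j)
      = -∑ j ∈ Ico 1 n, (l1Weight α (j - 1) - l1Weight α j) * U (n - j) := by
    rw [← sum_neg_distrib]
    exact sum_congr rfl fun j _ => by ring
  have hscheme := hrec n hn
  rw [hsum_neg, Real.rpow_neg hτ.le] at hscheme
  field_simp at hscheme
  linear_combination hscheme
end
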